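/- arXiv:1805.01316 — 2 statements merged into one kernel-verified Lean document; each statement's English description precedes it below -/
import Mathlib

section
/- Let M > 0 and 0 < ε ≤ r ≤ R with MR < π. Let a be a positive differentiable real-valued function on an open interval containing [ε, R], and suppose a(s) ≤ (s/2) φ(Ms) a'(s) for all s ∈ [ε, r], where φ(u) = sinh u / sin u. Then log(a(r)/a(ε)) ≥ 2 log(r/ε) + ∫_{Mε}^{Mr} g(v) dv, where g(v) = 2(1−φ(v))/(v φ(v)). -/
open MeasureTheory intervalIntegral

/-- `φ(u) = sinh u / sin u`. -/
noncomputable def phi (u : ℝ) : ℝ := Real.sinh u / Real.sin u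

/-- `g(v) = 2(1 - φ(v)) / (v φ(v))`. -/
noncomputable def gfun (v : ℝ) : ℝ := 2 * (1 - phi v) / (v * phi v)

/-- Integrated form of the differential inequality `a(s) ≤ (s/2) φ(Ms) a'(s)`:
`log(a(r)/a(ε)) ≥ 2 log(r/ε) + ∫_{Mε}^{Mr} g(v) dv`. -/
theorem stmt_12 (M ε r R : ℝ) (hM : 0 < M) (hε : 0 < ε) (hεr : ε ≤ r)
    (hrR : r ≤ R) (hMR : M * R < Real.pi) (a : ℝ → ℝ)
    (ha : ∀ s ∈ Set.Icc ε R, DifferentiableAt ℝ a s)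
    (hpos : ∀ s ∈ Set.Icc ε R, 0 < a s)
    (hineq : ∀ s ∈ Set.Icc ε r, a s ≤ s / 2 * phi (M * s) * deriv a s) :
    2 * Real.log (r / ε) + (∫ v in (M * ε)..(M * r), gfun v) ≤
      Real.log (a r / a ε) := by
  set c := M * ε with hc
  have hphi_pos : ∀ v ∈ Set.Ioo (0:ℝ) Real.pi, 0 < phi v := fun v hv =>
    div_pos (Real.sinh_pos_iff.2 hv.1) (Real.sin_pos_of_pos_of_lt_pi hv.1 hv.2)
  have hg_cont : ∀ v ∈ Set.Ioo (0:ℝ) Real.pi, ContinuousAt gfun v := by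
    intro v hv
    have hsin : Real.sin v ≠ 0 := (Real.sin_pos_of_pos_of_lt_pi hv.1 hv.2).ne'
    have hphi : ContinuousAt phi v :=
      Real.continuous_sinh.continuousAt.div Real.continuous_sin.continuousAt hsin
    have hden : v * phi v ≠ 0 := by
      have h1 := hphi_pos v hv
      have h2 := hv.1
      positivity
    exact (continuousAt_const.mul (continuousAt_const.sub hphi)).div
      (continuousAt_id.mul hphi) hden
  have hgmem : ∀ s ∈ Set.Icc ε r, M * s ∈ Set.Ioo (0:ℝ) Real.pi := by
    intro s hs
    refine ⟨by have := hε.trans_le hs.1; positivity, ?_⟩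
    calc M * s ≤ M * R := by nlinarith [hs.2]
      _ < Real.pi := hMR
  -- the auxiliary function
  set h : ℝ → ℝ := fun s => Real.log (a s) -
      (2 * Real.log s + ∫ v in c..(M * s), gfun v) with hhdef
  -- derivative of h at points of [ε, r]
  have key : ∀ s ∈ Set.Icc ε r,
      HasDerivAt h (deriv a s / a s - (2 * s⁻¹ + M * gfun (M * s))) s := by
    intro s hs
    have hsR : s ∈ Set.Icc ε R := ⟨hs.1, hs.2.trans hrR⟩
    have hs0 : 0 < s := hε.trans_le hs.1
    have hapos := hpos s hsR
    have h1 : HasDerivAt (fun t => Real.log (a t)) (deriv a s / a s) s :=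
      HasDerivAt.log (ha s hsR).hasDerivAt hapos.ne'
    have h2 : HasDerivAt (fun t => 2 * Real.log t) (2 * s⁻¹) s :=
      (Real.hasDerivAt_log hs0.ne').const_mul 2
    -- integral part
    have hsub : Set.uIcc c (M * s) ⊆ Set.Ioo (0:ℝ) Real.pi := by
      rw [Set.uIcc_of_le (by nlinarith [hs.1] : c ≤ M * s)]
      intro v hv
      exact ⟨lt_of_lt_of_le (hgmem ε ⟨le_refl ε, hεr⟩).1 hv.1,
        lt_of_le_of_lt hv.2 (hgmem s hs).2⟩
    have hint : IntervalIntegrable gfun volume c (M * s) := by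
      apply ContinuousOn.intervalIntegrable
      exact fun v hv => ((hg_cont v (hsub hv)).continuousWithinAt)
    have hmeas : StronglyMeasurableAtFilter gfun (nhds (M * s)) volume :=
      ContinuousAt.stronglyMeasurableAtFilter isOpen_Ioo hg_cont (M * s) (hgmem s hs)
    have hF : HasDerivAt (fun u => ∫ v in c..u, gfun v) (gfun (M * s)) (M * s) :=
      intervalIntegral.integral_hasDerivAt_right hint hmeas (hg_cont _ (hgmem s hs))
    have hlin : HasDerivAt (fun t : ℝ => M * t) M s := by
      simpa using (hasDerivAt_id s).const_mul M
    have h3 : HasDerivAt (fun t => ∫ v in c..(M * t), gfun v) (M * gfun (M * s)) s := by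
      have := hF.comp s hlin
      exact this.congr_deriv (mul_comm _ _)
    exact h1.sub (h2.add h3)
  -- derivative nonneg on the interior
  have hderiv_nonneg : ∀ s ∈ Set.Ioo ε r,
      0 ≤ deriv a s / a s - (2 * s⁻¹ + M * gfun (M * s)) := by
    intro s hs
    have hs' : s ∈ Set.Icc ε r := Set.mem_Icc_of_Ioo hs
    have hsR : s ∈ Set.Icc ε R := ⟨hs'.1, hs'.2.trans hrR⟩
    have hs0 : 0 < s := hε.trans_le hs'.1
    have hapos := hpos s hsR
    have hMs := hgmem s hs'
    have hphiP : 0 < phi (M * s) := hphi_pos _ hMs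
    have hsum : 2 * s⁻¹ + M * gfun (M * s) = 2 / (s * phi (M * s)) := by
      rw [gfun]
      field_simp
      rw [mul_comm s M, one_add_div hphiP.ne']; ring
    rw [sub_nonneg, hsum, div_le_div_iff₀ (by positivity) hapos]
    have := hineq s hs'
    nlinarith
  -- h is monotone on [ε, r]
  have hmono : MonotoneOn h (Set.Icc ε r) := by
    apply monotoneOn_of_deriv_nonneg (convex_Icc ε r)
    · exact fun s hs => (key s hs).continuousAt.continuousWithinAt
    · intro s hs
      rw [interior_Icc] at hs
      exact ((key s (Set.mem_Icc_of_Ioo hs)).differentiableAt).differentiableWithinAt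
    · intro s hs
      rw [interior_Icc] at hs
      rw [(key s (Set.mem_Icc_of_Ioo hs)).deriv]
      exact hderiv_nonneg s hs
  have hle := hmono (Set.left_mem_Icc.2 hεr) (Set.right_mem_Icc.2 hεr) hεr
  have haε : 0 < a ε := hpos ε ⟨le_refl ε, hεr.trans hrR⟩
  have har : 0 < a r := hpos r ⟨hεr, hrR⟩
  have hr0 : 0 < r := hε.trans_le hεr
  rw [Real.log_div har.ne' haε.ne', Real.log_div hr0.ne' hε.ne']
  simp only [hhdef] at hle
  rw [intervalIntegral.integral_same] at hle
  linarith
end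

section
/- Let M > 0 and R > 0 with MR < π. Let a be a positive differentiable real-valued function on (0, R] such that a(s) ≤ (s/2) φ(Ms) a'(s) for all s ∈ (0, R], where φ(u) = sinh u / sin u, and such that liminf_{ε→0⁺} a(ε)/ε² ≥ π. Then for every r ∈ (0, R], a(r) ≥ π r² exp(η(Mr)), where η(t) = ∫₀ᵗ g(v) dv and g(v) = 2(1−φ(v))/(v φ(v)). -/
/-- `η(t) = ∫₀ᵗ g(v) dv`. -/
noncomputable def eta (t : ℝ) : ℝ := ∫ v in (0:ℝ)..t, gfun v

open Real MeasureTheory intervalIntegral Filter Set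

noncomputable def Kc : ℝ := Real.sinh Real.pi + 1

lemma Kc_pos : 0 < Kc := by
  have := Real.sinh_pos_iff.2 Real.pi_pos
  unfold Kc; linarith

lemma cosh_sub_cos_le : ∀ u ∈ Set.Icc (0:ℝ) Real.pi,
    Real.cosh u - Real.cos u ≤ Kc * u := by
  have hd : ∀ u : ℝ, HasDerivAt (fun u => Kc * u - Real.cosh u + Real.cos u)
      (Kc - Real.sinh u + (-Real.sin u)) u := by
    intro u
    have h1 : HasDerivAt (fun u : ℝ => Kc * u) (Kc * 1) u := (hasDerivAt_id u).const_mul Kc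
    have h := (h1.sub (Real.hasDerivAt_cosh u)).add (Real.hasDerivAt_cos u)
    rw [mul_one] at h; exact h
  have hmono : MonotoneOn (fun u => Kc * u - Real.cosh u + Real.cos u)
      (Set.Icc 0 Real.pi) := by
    apply monotoneOn_of_deriv_nonneg (convex_Icc 0 Real.pi)
    · exact fun u _ => ((hd u).continuousAt).continuousWithinAt
    · intro u _; exact (hd u).differentiableAt.differentiableWithinAt
    · intro u hu
      rw [interior_Icc] at hu
      rw [(hd u).deriv]
      have h1 : Real.sinh u ≤ Real.sinh Real.pi := Real.sinh_le_sinh.2 hu.2.le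
      have h2 : Real.sin u ≤ 1 := Real.sin_le_one u
      unfold Kc; linarith
  intro u hu
  have := hmono (Set.left_mem_Icc.2 Real.pi_pos.le) hu hu.1
  simp only [mul_zero, Real.cosh_zero, Real.cos_zero] at this
  linarith

lemma sinh_sub_sin_le : ∀ v ∈ Set.Icc (0:ℝ) Real.pi,
    Real.sinh v - Real.sin v ≤ Kc / 2 * v ^ 2 := by
  have hd : ∀ v : ℝ, HasDerivAt (fun v => Kc / 2 * v ^ 2 - Real.sinh v + Real.sin v)
      (Kc * v - Real.cosh v + Real.cos v) v := by
    intro v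
    have h1 : HasDerivAt (fun v : ℝ => v ^ 2) (2 * v) v := by
      simpa using hasDerivAt_pow 2 v
    have h2 : HasDerivAt (fun v : ℝ => Kc / 2 * v ^ 2) (Kc / 2 * (2 * v)) v := h1.const_mul _
    have := (h2.sub (Real.hasDerivAt_sinh v)).add (Real.hasDerivAt_sin v)
    exact this.congr_deriv (by ring)
  have hmono : MonotoneOn (fun v => Kc / 2 * v ^ 2 - Real.sinh v + Real.sin v)
      (Set.Icc 0 Real.pi) := by
    apply monotoneOn_of_deriv_nonneg (convex_Icc 0 Real.pi)
    · exact fun v _ => ((hd v).continuousAt).continuousWithinAt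
    · intro v _; exact (hd v).differentiableAt.differentiableWithinAt
    · intro v hv
      rw [interior_Icc] at hv
      rw [(hd v).deriv]
      have := cosh_sub_cos_le v ⟨hv.1.le, hv.2.le⟩
      linarith
  intro v hv
  have := hmono (Set.left_mem_Icc.2 Real.pi_pos.le) hv hv.1
  simp only [ne_eq, OfNat.ofNat_ne_zero, not_false_eq_true, zero_pow, mul_zero,
    Real.sinh_zero, Real.sin_zero] at this
  linarith

lemma phi_pos {v : ℝ} (h0 : 0 < v) (hπ : v < Real.pi) : 0 < phi v :=
  div_pos (Real.sinh_pos_iff.2 h0) (Real.sin_pos_of_pos_of_lt_pi h0 hπ)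

lemma gfun_eq {v : ℝ} (h0 : 0 < v) (hπ : v < Real.pi) :
    gfun v = 2 * (Real.sin v - Real.sinh v) / (v * Real.sinh v) := by
  have hs : Real.sin v ≠ 0 := (Real.sin_pos_of_pos_of_lt_pi h0 hπ).ne'
  have hsh : Real.sinh v ≠ 0 := (Real.sinh_pos_iff.2 h0).ne'
  unfold gfun phi
  field_simp

lemma gfun_abs_le {v : ℝ} (h0 : 0 < v) (hπ : v < Real.pi) : |gfun v| ≤ Kc := by
  have hsin : 0 < Real.sin v := Real.sin_pos_of_pos_of_lt_pi h0 hπ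
  have hsinh : v < Real.sinh v := Real.self_lt_sinh_iff.2 h0
  have hsinlt : Real.sin v < v := Real.sin_lt h0
  have hden : 0 < v * Real.sinh v := mul_pos h0 (by linarith)
  rw [gfun_eq h0 hπ]
  rw [abs_div, abs_of_pos hden, abs_of_nonpos (by nlinarith : 2 * (Real.sin v - Real.sinh v) ≤ 0)]
  rw [div_le_iff₀ hden]
  have hb := sinh_sub_sin_le v ⟨h0.le, hπ.le⟩
  nlinarith [Kc_pos]

lemma gfun_measurable : Measurable gfun := by
  unfold gfun phi
  exact ((measurable_const.mul (measurable_const.sub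
    (Real.measurable_sinh.div Real.measurable_sin))).div
    (measurable_id.mul (Real.measurable_sinh.div Real.measurable_sin)))

lemma gfun_intInt {t : ℝ} (h0 : 0 ≤ t) (hπ : t < Real.pi) :
    IntervalIntegrable gfun volume 0 t := by
  rw [intervalIntegrable_iff_integrableOn_Ioc_of_le h0]
  apply Measure.integrableOn_of_bounded (M := Kc)
  · exact ((measure_Ioc_lt_top (a := (0:ℝ)) (b := t))).ne
  · exact gfun_measurable.aestronglyMeasurable
  · rw [ae_restrict_iff' measurableSet_Ioc]
    filter_upwards with v hv
    exact gfun_abs_le hv.1 (lt_of_le_of_lt hv.2 hπ)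

lemma eta_abs_le {t : ℝ} (h0 : 0 ≤ t) (hπ : t < Real.pi) : |eta t| ≤ Kc * t := by
  have := intervalIntegral.norm_integral_le_of_norm_le_const
    (f := gfun) (a := 0) (b := t) (C := Kc) ?_
  · simpa [eta, abs_of_nonneg h0] using this
  · intro x hx
    rw [Set.uIoc_of_le h0] at hx
    exact gfun_abs_le hx.1 (lt_of_le_of_lt hx.2 hπ)

lemma eta_hasDeriv {t : ℝ} (h0 : 0 < t) (hπ : t < Real.pi) :
    HasDerivAt eta (gfun t) t := by
  apply intervalIntegral.integral_hasDerivAt_right (gfun_intInt h0.le hπ)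
  · exact ⟨Set.univ, Filter.univ_mem, gfun_measurable.aestronglyMeasurable.restrict⟩
  · have hsin : Real.sin t ≠ 0 := (Real.sin_pos_of_pos_of_lt_pi h0 hπ).ne'
    have hphi : ContinuousAt phi t :=
      Real.continuous_sinh.continuousAt.div Real.continuous_sin.continuousAt hsin
    have hden : t * phi t ≠ 0 := (mul_pos h0 (phi_pos h0 hπ)).ne'
    exact (continuousAt_const.mul (continuousAt_const.sub hphi)).div
      (continuousAt_id.mul hphi) hden

/-- If `a > 0` satisfies `a(s) ≤ (s/2) φ(Ms) a'(s)` on `(0,R]` and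
`liminf_{ε→0⁺} a(ε)/ε² ≥ π`, then `a(r) ≥ π r² exp(η(Mr))` on `(0,R]`. -/
theorem stmt_13 (M R : ℝ) (hM : 0 < M) (hR : 0 < R) (hMR : M * R < Real.pi)
    (a : ℝ → ℝ)
    (ha : ∀ s ∈ Set.Ioc 0 R, DifferentiableAt ℝ a s)
    (hpos : ∀ s ∈ Set.Ioc 0 R, 0 < a s)
    (hineq : ∀ s ∈ Set.Ioc 0 R, a s ≤ s / 2 * phi (M * s) * deriv a s)
    (hliminf : Real.pi ≤
      Filter.liminf (fun e : ℝ => a e / e ^ 2) (nhdsWithin 0 (Set.Ioi 0))) :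
    ∀ r ∈ Set.Ioc 0 R, Real.pi * r ^ 2 * Real.exp (eta (M * r)) ≤ a r := by
  -- the comparison function
  set F : ℝ → ℝ := fun s => Real.log (a s) - 2 * Real.log s - eta (M * s) with hF
  have hMs : ∀ s ∈ Set.Ioc 0 R, 0 < M * s ∧ M * s < Real.pi := by
    intro s hs
    refine ⟨mul_pos hM hs.1, lt_of_le_of_lt ?_ hMR⟩
    exact mul_le_mul_of_nonneg_left hs.2 hM.le
  -- derivative of F on Ioc 0 R
  have hFd : ∀ s ∈ Set.Ioc 0 R,
      HasDerivAt F (deriv a s / a s - 2 / s - gfun (M * s) * M) s := by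
    intro s hs
    obtain ⟨hMs1, hMs2⟩ := hMs s hs
    have h1 : HasDerivAt (fun s => Real.log (a s)) ((a s)⁻¹ * deriv a s) s := by
      exact (Real.hasDerivAt_log (hpos s hs).ne').comp s (ha s hs).hasDerivAt
    have h2 : HasDerivAt (fun s : ℝ => 2 * Real.log s) (2 * s⁻¹) s :=
      (Real.hasDerivAt_log hs.1.ne').const_mul 2
    have h3 : HasDerivAt (fun s : ℝ => eta (M * s)) (gfun (M * s) * M) s := by
      have := (eta_hasDeriv hMs1 hMs2).comp s ((hasDerivAt_id s).const_mul M)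
      rw [mul_one] at this; exact this
    have := (h1.sub h2).sub h3
    exact this.congr_deriv (by ring)
  have hF' : ∀ s ∈ Set.Ioo 0 R, 0 ≤ deriv F s := by
    intro s hs
    have hs' : s ∈ Set.Ioc 0 R := ⟨hs.1, hs.2.le⟩
    obtain ⟨hMs1, hMs2⟩ := hMs s hs'
    rw [(hFd s hs').deriv]
    have hphi : 0 < phi (M * s) := phi_pos hMs1 hMs2
    have has : 0 < a s := hpos s hs'
    have hid : gfun (M * s) * M = 2 / (s * phi (M * s)) - 2 / s := by
      unfold gfun
      field_simp [hs.1.ne', hphi.ne', hM.ne']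
    have hkey : 2 / (s * phi (M * s)) ≤ deriv a s / a s := by
      rw [div_le_div_iff₀ (mul_pos hs.1 hphi) has]
      have := hineq s hs'
      nlinarith
    rw [hid]
    linarith
  -- F is monotone on Ioc 0 R
  have hFmono : MonotoneOn F (Set.Ioc 0 R) := by
    apply monotoneOn_of_deriv_nonneg (convex_Ioc 0 R)
    · exact fun s hs => ((hFd s hs).continuousAt).continuousWithinAt
    · intro s hs
      rw [interior_Ioc] at hs
      exact (hFd s ⟨hs.1, hs.2.le⟩).differentiableAt.differentiableWithinAt
    · intro s hs
      rw [interior_Ioc] at hs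
      exact hF' s hs
  intro r hr
  -- key estimate : log π ≤ F r
  have hlog : Real.log Real.pi ≤ F r := by
    apply le_of_forall_pos_le_add
    intro δ hδ
    -- choose a suitable ε
    set c : ℝ := Real.pi * Real.exp (-(δ / 2)) with hc
    have hcpos : 0 < c := mul_pos Real.pi_pos (Real.exp_pos _)
    have hclt : c < Real.pi := by
      have := Real.exp_lt_one_iff.2 (by linarith : -(δ/2) < 0)
      nlinarith [Real.pi_pos]
    have hEbdd : Filter.IsBoundedUnder (· ≥ ·) (nhdsWithin 0 (Set.Ioi 0))
        (fun e : ℝ => a e / e ^ 2) := by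
      refine ⟨0, Filter.eventually_map.2 ?_⟩
      filter_upwards [Ioo_mem_nhdsGT hR] with e he
      exact div_nonneg (hpos e ⟨he.1, he.2.le⟩).le (sq_nonneg e)
    have hev1 : ∀ᶠ e in nhdsWithin 0 (Set.Ioi 0), c < a e / e ^ 2 :=
      Filter.eventually_lt_of_lt_liminf (lt_of_lt_of_le hclt hliminf) hEbdd
    have hKM : 0 < δ / (2 * Kc * M) := by
      have := Kc_pos; positivity
    have hev2 : Set.Ioo (0:ℝ) (min r (δ / (2 * Kc * M))) ∈ nhdsWithin 0 (Set.Ioi 0) :=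
      Ioo_mem_nhdsGT (lt_min hr.1 hKM)
    obtain ⟨ε, hε1, hε2⟩ :=
      (hev1.and (Filter.eventually_of_mem hev2 (fun x hx => hx))).exists
    have hε0 : 0 < ε := hε2.1
    have hεr : ε < r := (lt_min_iff.1 hε2.2).1
    have hεδ : ε < δ / (2 * Kc * M) := (lt_min_iff.1 hε2.2).2
    have hεIoc : ε ∈ Set.Ioc 0 R := ⟨hε0, hεr.le.trans hr.2⟩
    obtain ⟨hMε1, hMε2⟩ := hMs ε hεIoc
    -- eta (M ε) is small
    have hetaε : eta (M * ε) ≤ δ / 2 := by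
      have h1 := eta_abs_le hMε1.le hMε2
      have h2 : Kc * (M * ε) < δ / 2 := by
        have := Kc_pos
        rw [lt_div_iff₀ (by positivity : (0:ℝ) < 2 * Kc * M)] at hεδ
        nlinarith
      have := abs_le.1 h1
      linarith
    -- log bound at ε
    have haε : 0 < a ε := hpos ε hεIoc
    have hlogε : Real.log Real.pi - δ / 2 < Real.log (a ε) - 2 * Real.log ε := by
      have h1 : Real.log c < Real.log (a ε / ε ^ 2) := Real.log_lt_log hcpos hε1
      have h2 : Real.log c = Real.log Real.pi - δ / 2 := by
        rw [hc, Real.log_mul Real.pi_pos.ne' (Real.exp_pos _).ne', Real.log_exp]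
        ring
      have h3 : Real.log (a ε / ε ^ 2) = Real.log (a ε) - 2 * Real.log ε := by
        rw [Real.log_div haε.ne' (by positivity : (ε:ℝ) ^ 2 ≠ 0), Real.log_pow]
        push_cast; ring
      rw [h2, h3] at h1
      exact h1
    have hFle : F ε ≤ F r := hFmono hεIoc hr hεr.le
    simp only [hF] at hFle ⊢
    linarith
  -- conclude
  have har : 0 < a r := hpos r hr
  have key : Real.log Real.pi + 2 * Real.log r + eta (M * r) ≤ Real.log (a r) := by
    simp only [hF] at hlog; linarith
  calc Real.pi * r ^ 2 * Real.exp (eta (M * r))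
      = Real.exp (Real.log Real.pi + 2 * Real.log r + eta (M * r)) := by
        rw [Real.exp_add, Real.exp_add, Real.exp_log Real.pi_pos, two_mul, Real.exp_add,
          Real.exp_log hr.1]
        ring
    _ ≤ Real.exp (Real.log (a r)) := Real.exp_le_exp.2 key
    _ = a r := Real.exp_log har
end
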